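/- arXiv:1512.01937 — 2 statements merged into one kernel-verified Lean document; each statement's English description precedes it below -/
import Mathlib

section
/- Let X be a strongly zero-dimensional topological space and Y a metrizable space. Then every mapping f : X → Y having a base of zero sets which is a countable union of strongly functionally discrete families is of the first Baire class; that is, Σ₀^f(X,Y) ⊆ B₁(X,Y). -/
open Set Filter Topology

def IsZeroSet {X : Type*} [TopologicalSpace X] (A : Set X) : Prop :=
  ∃ f : X → ℝ, Continuous f ∧ A = f ⁻¹' {0}

def IsCozeroSet {X : Type*} [TopologicalSpace X] (A : Set X) : Prop := IsZeroSet Aᶜ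

def IsDiscreteFamily {X : Type*} [TopologicalSpace X] {ι : Type*} (U : ι → Set X) : Prop :=
  ∀ x : X, ∃ V ∈ 𝓝 x, {i | (U i ∩ V).Nonempty}.Subsingleton

def IsSFDFamily {X : Type*} [TopologicalSpace X] {ι : Type*} (A : ι → Set X) : Prop :=
  ∃ U : ι → Set X, IsDiscreteFamily U ∧ (∀ i, IsCozeroSet (U i)) ∧ ∀ i, closure (A i) ⊆ U i

def IsSFDSetFamily {X : Type*} [TopologicalSpace X] (𝓐 : Set (Set X)) : Prop :=
  IsSFDFamily (fun A : 𝓐 => (A : Set X))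

def IsBaseFor {X Y : Type*} [TopologicalSpace X] [TopologicalSpace Y]
    (𝓑 : Set (Set X)) (f : X → Y) : Prop :=
  ∀ V : Set Y, IsOpen V → ∃ 𝓢 ⊆ 𝓑, f ⁻¹' V = ⋃₀ 𝓢

def FunctionallyFSigma {X : Type*} [TopologicalSpace X] (A : Set X) : Prop :=
  ∃ F : ℕ → Set X, (∀ n, IsZeroSet (F n)) ∧ A = ⋃ n, F n

def MemK1 {X Y : Type*} [TopologicalSpace X] [TopologicalSpace Y] (f : X → Y) : Prop :=
  ∀ V : Set Y, IsOpen V → FunctionallyFSigma (f ⁻¹' V)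

def MemB1 {X Y : Type*} [TopologicalSpace X] [TopologicalSpace Y] (f : X → Y) : Prop :=
  ∃ g : ℕ → X → Y, (∀ n, Continuous (g n)) ∧
    ∀ x, Tendsto (fun n => g n x) atTop (𝓝 (f x))

def MemSigmaF {X Y : Type*} [TopologicalSpace X] [TopologicalSpace Y] (f : X → Y) : Prop :=
  ∃ 𝓑 : ℕ → Set (Set X), (∀ n, IsSFDSetFamily (𝓑 n)) ∧ IsBaseFor (⋃ n, 𝓑 n) f

def MemSigmaF0 {X Y : Type*} [TopologicalSpace X] [TopologicalSpace Y] (f : X → Y) : Prop :=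
  ∃ 𝓑 : ℕ → Set (Set X), (∀ n, IsSFDSetFamily (𝓑 n)) ∧
    (∀ n, ∀ A ∈ 𝓑 n, IsZeroSet A) ∧ IsBaseFor (⋃ n, 𝓑 n) f

def CompletelySeparatedSets {X : Type*} [TopologicalSpace X] (A B : Set X) : Prop :=
  ∃ h : X → ℝ, Continuous h ∧ (∀ x, h x ∈ Icc (0:ℝ) 1) ∧
    (∀ x ∈ A, h x = 0) ∧ ∀ x ∈ B, h x = 1

def StronglyZeroDimensional (X : Type*) [TopologicalSpace X] : Prop :=
  ∀ A B : Set X, CompletelySeparatedSets A B → ∃ U : Set X, IsClopen U ∧ A ⊆ U ∧ U ⊆ Bᶜ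

def IsCSet {X : Type*} [TopologicalSpace X] (A : Set X) : Prop :=
  ∃ U : ℕ → Set X, (∀ n, IsClopen (U n)) ∧ A = ⋂ n, U n

def IsCSigmaSet {X : Type*} [TopologicalSpace X] (A : Set X) : Prop :=
  ∃ C : ℕ → Set X, (∀ n, IsCSet (C n)) ∧ A = ⋃ n, C n

def AlmostStronglyZeroDimensional (X : Type*) [TopologicalSpace X] : Prop :=
  ∀ A : Set X, IsZeroSet A → IsCSigmaSet A

def CountablyCompactIn {X : Type*} [TopologicalSpace X] (F : Set X) : Prop :=
  ∀ U : ℕ → Set X, (∀ n, IsOpen (U n)) → F ⊆ ⋃ n, U n →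
    ∃ s : Finset ℕ, F ⊆ ⋃ n ∈ s, U n

/-!
Fix a level `N`. A chain `σ = (A₀, …, A_m)` of base sets with `A_j ∈ B n_j`, `n_j ≤ N` and
oscillation of `f` on `A_j` below `1/(j+1)` has a zero set `E σ = ⋂ A_j` as core and a cozero
neighbourhood `U σ = ⋂ U(A_j)`; for fixed length these neighbourhoods form a locally finite family.
Hence the union of the cores of length-`m` chains missing `E σ` is a zero set, and strong
zero-dimensionality yields a clopen `G σ ⊆ U σ` around `E σ` missing all of them. The `N`-th
approximant takes at `x` the value of `f` at a point of `E τ`, for a longest chain `τ` whose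
clopen sets `G (τ|k)` all contain `x`; by local finiteness this choice is locally constant in `x`.
If `x ∈ E σ` with `σ` of length `m`, then `E (τ|m)` must meet `E σ`, so the approximant is
`2/(m+1)`-close to `f x` as soon as `N` bounds the indices of `σ`.
-/

section

variable {X : Type*} [TopologicalSpace X]

theorem IsZeroSet.union {A B : Set X} (hA : IsZeroSet A) (hB : IsZeroSet B) :
    IsZeroSet (A ∪ B) := by
  obtain ⟨p, hp, rfl⟩ := hA
  obtain ⟨q, hq, rfl⟩ := hB
  exact ⟨p * q, hp.mul hq, by ext; simp [mul_eq_zero]⟩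

theorem isZeroSet_iInter {ι : Type*} [Finite ι] {A : ι → Set X} (hA : ∀ i, IsZeroSet (A i)) :
    IsZeroSet (⋂ i, A i) := by
  have := Fintype.ofFinite ι
  choose φ hφ hA using hA
  refine ⟨fun x => ∑ i, |φ i x|, by fun_prop, ?_⟩
  ext x
  simp [hA, Finset.sum_eq_zero_iff_of_nonneg]

theorem isZeroSet_iUnion_of_locallyFinite_mulSupport {ι : Type*} {φ : ι → X → ℝ}
    (hφ : ∀ i, Continuous (φ i)) (hfin : LocallyFinite fun i => Function.mulSupport (φ i)) :
    IsZeroSet (⋃ i, φ i ⁻¹' {0}) := by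
  refine ⟨fun x => ∏ᶠ i, φ i x, continuous_finprod hφ hfin, ?_⟩
  ext x
  simp only [mem_iUnion, mem_preimage, mem_singleton_iff]
  constructor
  · rintro ⟨i, hi⟩
    exact finprod_eq_zero _ i hi ((hfin.point_finite x).subset fun j hj => hj)
  · contrapose!
    exact finprod_ne_zero

theorem isZeroSet_iUnion_of_finite {ι : Type*} [Finite ι] {A : ι → Set X}
    (hA : ∀ i, IsZeroSet (A i)) : IsZeroSet (⋃ i, A i) := by
  choose φ hφ hA using hA
  simp only [hA]
  exact isZeroSet_iUnion_of_locallyFinite_mulSupport hφ (locallyFinite_of_finite _)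

theorem IsZeroSet.exists_zero_one {A B : Set X} (hA : IsZeroSet A) (hB : IsZeroSet B)
    (hAB : Disjoint A B) :
    ∃ h : X → ℝ, Continuous h ∧ (∀ x, h x ∈ Icc (0 : ℝ) 1) ∧ A = h ⁻¹' {0} ∧ B = h ⁻¹' {1} := by
  obtain ⟨p, hp, rfl⟩ := hA
  obtain ⟨q, hq, rfl⟩ := hB
  have hpos : ∀ x, 0 < |p x| + |q x| := fun x => by
    by_contra! h
    have hpx : p x = 0 := abs_eq_zero.1 (by linarith [abs_nonneg (p x), abs_nonneg (q x)])
    have hqx : q x = 0 := abs_eq_zero.1 (by linarith [abs_nonneg (p x), abs_nonneg (q x)])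
    exact hAB.notMem_of_mem_left hpx hqx
  refine ⟨fun x => |p x| / (|p x| + |q x|), by fun_prop (disch := exact fun x => (hpos x).ne'),
    fun x => ⟨by positivity, (div_le_one (hpos x)).2 (by linarith [abs_nonneg (q x)])⟩, ?_, ?_⟩
  · ext x
    simp [div_eq_zero_iff, (hpos x).ne']
  · ext x
    simp [div_eq_one_iff_eq (hpos x).ne']

theorem StronglyZeroDimensional.exists_isClopen (hX : StronglyZeroDimensional X) {A B : Set X}
    (hA : IsZeroSet A) (hB : IsZeroSet B) (hAB : Disjoint A B) :
    ∃ G, IsClopen G ∧ A ⊆ G ∧ Disjoint G B := by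
  obtain ⟨h, hh, h01, rfl, rfl⟩ := hA.exists_zero_one hB hAB
  obtain ⟨G, hG, hAG, hGB⟩ := hX _ _ ⟨h, hh, h01, fun x hx => hx, fun x hx => hx⟩
  exact ⟨G, hG, hAG, subset_compl_iff_disjoint_right.1 hGB⟩

theorem isZeroSet_iUnion_of_locallyFinite {ι : Type*} {A U : ι → Set X}
    (hA : ∀ i, IsZeroSet (A i)) (hU : ∀ i, IsCozeroSet (U i)) (hAU : ∀ i, A i ⊆ U i)
    (hfin : LocallyFinite U) : IsZeroSet (⋃ i, A i) := by
  choose h hh _ hhA hhU using fun i =>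
    (hA i).exists_zero_one (hU i) (disjoint_compl_right.mono_left (hAU i))
  have hsupp : ∀ i, Function.mulSupport (h i) = U i := fun i => by
    ext x
    rw [Function.mem_mulSupport, ← not_iff_not, not_not, ← mem_compl_iff, hhU i]
    rfl
  simp only [hhA]
  exact isZeroSet_iUnion_of_locallyFinite_mulSupport hh (by simpa only [hsupp] using hfin)

theorem IsDiscreteFamily.locallyFinite {ι : Type*} {U : ι → Set X} (hU : IsDiscreteFamily U) :
    LocallyFinite U := fun x =>
  let ⟨V, hV, hsub⟩ := hU x
  ⟨V, hV, hsub.finite⟩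

theorem LocallyFinite.iInter_comp {ι κ : Type*} [Finite κ] {U : ι → Set X}
    (hU : LocallyFinite U) : LocallyFinite fun σ : κ → ι => ⋂ k, U (σ k) := by
  intro x
  obtain ⟨V, hV, hfin⟩ := hU x
  refine ⟨V, hV, (Set.Finite.pi fun _ => hfin).subset ?_⟩
  rintro σ ⟨y, hy, hyV⟩
  exact fun k _ => ⟨y, mem_iInter.1 hy k, hyV⟩

theorem LocallyFinite.sigma_le {ι : ℕ → Type*} {U : ∀ n, ι n → Set X}
    (hU : ∀ n, LocallyFinite (U n)) (N : ℕ) :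
    LocallyFinite fun a : Σ n, ι n => {x | a.1 ≤ N ∧ x ∈ U a.1 a.2} := by
  intro x
  choose V hV hfin using fun n => hU n x
  refine ⟨⋂ n ∈ Finset.range (N + 1), V n, (biInter_finset_mem _).2 fun n _ => hV n, ?_⟩
  refine ((Finset.range (N + 1)).finite_toSet.biUnion fun n _ =>
    (hfin n).image (Sigma.mk n)).subset ?_
  rintro ⟨n, i⟩ ⟨y, ⟨hn, hyU⟩, hyV⟩
  have hnN : n ∈ Finset.range (N + 1) := Finset.mem_range.2 (Nat.lt_succ_of_le hn)
  exact mem_biUnion hnN ⟨i, ⟨y, hyU, mem_iInter₂.1 hyV n hnN⟩, rfl⟩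

theorem LocallyFinite.isLocallyConstant_setOf_mem {ι : Type*} {G : ι → Set X}
    (hfin : LocallyFinite G) (hG : ∀ i, IsClopen (G i)) :
    IsLocallyConstant fun x => {i | x ∈ G i} := by
  refine (IsLocallyConstant.iff_eventually_eq _).2 fun x => ?_
  obtain ⟨V, hV, hfinV⟩ := hfin x
  have hmem : ∀ i, ∀ᶠ y in 𝓝 x, (y ∈ G i ↔ x ∈ G i) := fun i => by
    by_cases hx : x ∈ G i
    · filter_upwards [(hG i).isOpen.mem_nhds hx] with y hy using iff_of_true hy hx
    · filter_upwards [(hG i).compl.isOpen.mem_nhds hx] with y hy using iff_of_false hy hx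
  filter_upwards [hV, (eventually_all_finite hfinV).2 fun i _ => hmem i] with y hyV hy
  ext i
  by_cases hi : (G i ∩ V).Nonempty
  · exact hy i hi
  · exact iff_of_false (fun h => hi ⟨y, h, hyV⟩) (fun h => hi ⟨x, h, mem_of_mem_nhds hV⟩)

end

structure ZeroBaseData (X Y : Type*) [TopologicalSpace X] [PseudoMetricSpace Y] where
  f : X → Y
  B : ℕ → Set (Set X)
  U : (n : ℕ) → B n → Set X
  isZeroSet_mem : ∀ n, ∀ A ∈ B n, IsZeroSet A
  isCozeroSet_U : ∀ n A, IsCozeroSet (U n A)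
  subset_U : ∀ n (A : B n), (A : Set X) ⊆ U n A
  locallyFinite_U : ∀ n, LocallyFinite (U n)

namespace ZeroBaseData

variable {X Y : Type*} [TopologicalSpace X] [PseudoMetricSpace Y] (S : ZeroBaseData X Y)

def Chain (m : ℕ) : Type _ := Fin (m + 1) → Σ n, S.B n

def core {m : ℕ} (σ : S.Chain m) : Set X := ⋂ j, ((σ j).2 : Set X)

def nbhd {m : ℕ} (σ : S.Chain m) : Set X := ⋂ j, S.U (σ j).1 (σ j).2

def restrict {m M : ℕ} (σ : S.Chain M) (h : m ≤ M) : S.Chain m :=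
  fun j => σ (Fin.castLE (by omega) j)

def Small (k : ℕ) (A : Set X) : Prop :=
  ∀ a ∈ A, ∀ b ∈ A, dist (S.f a) (S.f b) < (k + 1 : ℝ)⁻¹

structure Admissible (N : ℕ) {m : ℕ} (σ : S.Chain m) : Prop where
  le : ∀ j, (σ j).1 ≤ N
  small : ∀ j : Fin (m + 1), S.Small j (σ j).2

variable {S}

theorem isZeroSet_core {m : ℕ} (σ : S.Chain m) : IsZeroSet (S.core σ) :=
  isZeroSet_iInter fun j => S.isZeroSet_mem _ _ (σ j).2.2

theorem isCozeroSet_nbhd {m : ℕ} (σ : S.Chain m) : IsCozeroSet (S.nbhd σ) := by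
  rw [IsCozeroSet, nbhd, compl_iInter]
  exact isZeroSet_iUnion_of_finite fun _ => S.isCozeroSet_U _ _

theorem core_subset_nbhd {m : ℕ} (σ : S.Chain m) : S.core σ ⊆ S.nbhd σ :=
  iInter_mono fun _ => S.subset_U _ _

theorem core_subset_core_restrict {m M : ℕ} (σ : S.Chain M) (h : m ≤ M) :
    S.core σ ⊆ S.core (S.restrict σ h) :=
  fun _ hx => mem_iInter.2 fun _ => mem_iInter.1 hx _

theorem Admissible.restrict {N m M : ℕ} {σ : S.Chain M} (hσ : S.Admissible N σ) (h : m ≤ M) :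
    S.Admissible N (S.restrict σ h) :=
  ⟨fun _ => hσ.le _, fun j => hσ.small (Fin.castLE (by omega) j)⟩

theorem Admissible.dist_lt {N m : ℕ} {σ : S.Chain m} (hσ : S.Admissible N σ) {a b : X}
    (ha : a ∈ S.core σ) (hb : b ∈ S.core σ) : dist (S.f a) (S.f b) < (m + 1 : ℝ)⁻¹ := by
  simpa using hσ.small (Fin.last m) a (mem_iInter.1 ha _) b (mem_iInter.1 hb _)

theorem locallyFinite_nbhd (N m : ℕ) :
    LocallyFinite fun σ : S.Chain m => {x | S.Admissible N σ ∧ x ∈ S.nbhd σ} :=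
  ((LocallyFinite.sigma_le S.locallyFinite_U N).iInter_comp).subset fun _ _ ⟨hσ, hx⟩ =>
    mem_iInter.2 fun j => ⟨hσ.le j, mem_iInter.1 hx j⟩

theorem isZeroSet_biUnion_core {N m : ℕ} {s : Set (S.Chain m)}
    (hs : ∀ τ ∈ s, S.Admissible N τ) : IsZeroSet (⋃ τ ∈ s, S.core τ) := by
  rw [biUnion_eq_iUnion]
  exact isZeroSet_iUnion_of_locallyFinite (fun τ => isZeroSet_core τ.1)
    (fun τ => isCozeroSet_nbhd τ.1) (fun τ => core_subset_nbhd τ.1)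
    (((S.locallyFinite_nbhd N m).comp_injective Subtype.val_injective).subset
      fun τ _ hx => ⟨hs τ τ.2, hx⟩)

variable (S) in
theorem exists_isClopen_separating (hX : StronglyZeroDimensional X) (N : ℕ) {m : ℕ}
    (σ : S.Chain m) :
    ∃ G, IsClopen G ∧ S.core σ ⊆ G ∧ G ⊆ S.nbhd σ ∧
      ∀ τ : S.Chain m, S.Admissible N τ → Disjoint (S.core τ) (S.core σ) →
        Disjoint G (S.core τ) := by
  let s : Set (S.Chain m) := {τ | S.Admissible N τ ∧ Disjoint (S.core τ) (S.core σ)}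
  obtain ⟨G, hG, hσG, hGD⟩ := hX.exists_isClopen (isZeroSet_core σ)
    ((isZeroSet_biUnion_core (s := s) fun τ hτ => hτ.1).union (isCozeroSet_nbhd σ))
    (disjoint_union_right.2 ⟨disjoint_iUnion₂_right.2 fun τ hτ => hτ.2.symm,
      disjoint_compl_right.mono_left (core_subset_nbhd σ)⟩)
  refine ⟨G, hG, hσG, disjoint_compl_right_iff_subset.1 (hGD.mono_right subset_union_right),
    fun τ hτ hdisj => hGD.mono_right ?_⟩
  exact (subset_biUnion_of_mem (u := S.core) (show τ ∈ s from ⟨hτ, hdisj⟩)).trans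
    subset_union_left

variable (S) in
noncomputable def separatingClopen (hX : StronglyZeroDimensional X) (N : ℕ) {m : ℕ}
    (σ : S.Chain m) : Set X :=
  (S.exists_isClopen_separating hX N σ).choose

variable (S) in
noncomputable def nestedClopen (hX : StronglyZeroDimensional X) (N : ℕ) {M : ℕ}
    (σ : S.Chain M) : Set X :=
  ⋂ k : Fin (M + 1), S.separatingClopen hX N (S.restrict σ k.is_le)

variable (hX : StronglyZeroDimensional X) (N : ℕ)

theorem separatingClopen_spec {m : ℕ} (σ : S.Chain m) :
    IsClopen (S.separatingClopen hX N σ) ∧ S.core σ ⊆ S.separatingClopen hX N σ ∧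
      S.separatingClopen hX N σ ⊆ S.nbhd σ ∧
      ∀ τ : S.Chain m, S.Admissible N τ → Disjoint (S.core τ) (S.core σ) →
        Disjoint (S.separatingClopen hX N σ) (S.core τ) :=
  (S.exists_isClopen_separating hX N σ).choose_spec

theorem nestedClopen_subset {m M : ℕ} (τ : S.Chain M) (h : m ≤ M) :
    S.nestedClopen hX N τ ⊆ S.separatingClopen hX N (S.restrict τ h) :=
  fun _ hx => mem_iInter.1 hx ⟨m, Nat.lt_succ_of_le h⟩

theorem isClopen_nestedClopen {M : ℕ} (σ : S.Chain M) : IsClopen (S.nestedClopen hX N σ) :=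
  isClopen_iInter_of_finite fun _ => (separatingClopen_spec hX N _).1

theorem core_subset_nestedClopen {M : ℕ} (σ : S.Chain M) :
    S.core σ ⊆ S.nestedClopen hX N σ :=
  subset_iInter fun _ => (core_subset_core_restrict σ _).trans
    (separatingClopen_spec hX N _).2.1

theorem nestedClopen_subset_nbhd {M : ℕ} (σ : S.Chain M) :
    S.nestedClopen hX N σ ⊆ S.nbhd σ :=
  (nestedClopen_subset hX N σ le_rfl).trans (separatingClopen_spec hX N σ).2.2.1

theorem disjoint_nestedClopen {m M : ℕ} {τ : S.Chain M} (h : m ≤ M) {σ : S.Chain m}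
    (hσ : S.Admissible N σ) (hdisj : Disjoint (S.core σ) (S.core (S.restrict τ h))) :
    Disjoint (S.nestedClopen hX N τ) (S.core σ) :=
  ((separatingClopen_spec hX N _).2.2.2 σ hσ hdisj).mono_left (nestedClopen_subset hX N τ h)

variable (S) in
def selection (x : X) (m : ℕ) : Set (S.Chain m) :=
  {σ | m ≤ N ∧ S.Admissible N σ ∧ x ∈ S.nestedClopen hX N σ}

theorem isLocallyConstant_selection : IsLocallyConstant (S.selection hX N) := by
  have hlc : ∀ m, IsLocallyConstant fun x => S.selection hX N x m := fun m =>
    LocallyFinite.isLocallyConstant_setOf_mem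
      ((S.locallyFinite_nbhd N m).subset fun σ x ⟨_, hσ, hx⟩ =>
        ⟨hσ, nestedClopen_subset_nbhd hX N σ hx⟩)
      fun σ => by
        show IsClopen {x | m ≤ N ∧ S.Admissible N σ ∧ x ∈ S.nestedClopen hX N σ}
        simp_rw [← and_assoc]
        by_cases hσ : m ≤ N ∧ S.Admissible N σ
        · simpa [hσ] using isClopen_nestedClopen hX N σ
        · simp [hσ, isClopen_empty]
  refine (IsLocallyConstant.iff_eventually_eq _).2 fun x => ?_
  filter_upwards [(eventually_all_finset (Finset.range (N + 1))).2 fun m _ =>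
    (IsLocallyConstant.iff_eventually_eq _).1 (hlc m) x] with y hy
  funext m
  by_cases hmN : m ≤ N
  · exact hy m (Finset.mem_range.2 (Nat.lt_succ_of_le hmN))
  · simp [selection, hmN]

variable (S) in
open scoped Classical in
noncomputable def pick (y₀ : Y) (s : (m : ℕ) → Set (S.Chain m)) : Y :=
  if h : ∃ x, ∃ σ ∈ s (Nat.findGreatest (fun m => ∃ x, ∃ σ ∈ s m, x ∈ S.core σ) N),
      x ∈ S.core σ
  then S.f h.choose else y₀

theorem exists_pick_eq (y₀ : Y) {s : (m : ℕ) → Set (S.Chain m)} {m : ℕ} (hm : m ≤ N)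
    {σ : S.Chain m} (hσ : σ ∈ s m) {x : X} (hx : x ∈ S.core σ) :
    ∃ M, m ≤ M ∧ ∃ τ ∈ s M, ∃ z ∈ S.core τ, S.pick N y₀ s = S.f z := by
  classical
  let P := fun m => ∃ x, ∃ σ ∈ s m, x ∈ S.core σ
  have hP : P (Nat.findGreatest P N) := Nat.findGreatest_spec hm ⟨x, σ, hσ, hx⟩
  obtain ⟨τ, hτ, hz⟩ := hP.choose_spec
  refine ⟨_, Nat.le_findGreatest hm ⟨x, σ, hσ, hx⟩, τ, hτ, hP.choose, hz, ?_⟩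
  rw [pick, dif_pos hP]

variable (S) in
noncomputable def approx (y₀ : Y) (x : X) : Y :=
  S.pick N y₀ (S.selection hX N x)

theorem continuous_approx (y₀ : Y) : Continuous (S.approx hX N y₀) :=
  ((isLocallyConstant_selection hX N).comp _).continuous

theorem dist_approx_lt {m : ℕ} (hmN : m ≤ N) {σ : S.Chain m} (hσ : S.Admissible N σ) {x : X}
    (hx : x ∈ S.core σ) (y₀ : Y) : dist (S.approx hX N y₀ x) (S.f x) < 2 * (m + 1 : ℝ)⁻¹ := by
  obtain ⟨M, hmM, τ, ⟨-, hτ, hxτ⟩, z, hz, hpick⟩ :=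
    exists_pick_eq N y₀ (s := S.selection hX N x) hmN
      ⟨hmN, hσ, core_subset_nestedClopen hX N σ hx⟩ hx
  obtain ⟨w, hwσ, hwτ⟩ : (S.core σ ∩ S.core (S.restrict τ hmM)).Nonempty :=
    not_disjoint_iff_nonempty_inter.1 fun hdisj =>
      (disjoint_nestedClopen hX N hmM hσ hdisj).notMem_of_mem_left hxτ hx
  rw [approx, hpick]
  calc dist (S.f z) (S.f x) ≤ dist (S.f z) (S.f w) + dist (S.f w) (S.f x) :=
        dist_triangle _ _ _
    _ < (m + 1 : ℝ)⁻¹ + (m + 1 : ℝ)⁻¹ :=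
      add_lt_add ((hτ.restrict hmM).dist_lt (core_subset_core_restrict τ hmM hz) hwτ)
        (hσ.dist_lt hwσ hx)
    _ = 2 * (m + 1 : ℝ)⁻¹ := by ring

theorem exists_mem_small (hbase : IsBaseFor (⋃ n, S.B n) S.f) (x : X) (k : ℕ) :
    ∃ n, ∃ A : S.B n, x ∈ (A : Set X) ∧ S.Small k A := by
  obtain ⟨𝓢, h𝓢B, h𝓢⟩ := hbase (Metric.ball (S.f x) ((k + 1 : ℝ)⁻¹ / 2)) Metric.isOpen_ball
  have hball : ∀ A ∈ 𝓢, ∀ a ∈ A, dist (S.f a) (S.f x) < (k + 1 : ℝ)⁻¹ / 2 :=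
    fun A hA a ha => by
      have ha' : a ∈ S.f ⁻¹' Metric.ball (S.f x) ((k + 1 : ℝ)⁻¹ / 2) :=
        h𝓢 ▸ mem_sUnion_of_mem ha hA
      exact ha'
  obtain ⟨A, hA𝓢, hxA⟩ : x ∈ ⋃₀ 𝓢 := h𝓢 ▸ Metric.mem_ball_self (by positivity)
  obtain ⟨n, hAn⟩ := mem_iUnion.1 (h𝓢B hA𝓢)
  refine ⟨n, ⟨A, hAn⟩, hxA, fun a ha b hb => ?_⟩
  calc dist (S.f a) (S.f b) ≤ dist (S.f a) (S.f x) + dist (S.f b) (S.f x) :=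
        dist_triangle_right _ _ _
    _ < (k + 1 : ℝ)⁻¹ := by linarith [hball A hA𝓢 a ha, hball A hA𝓢 b hb]

theorem tendsto_approx (hbase : IsBaseFor (⋃ n, S.B n) S.f) (y₀ : Y) (x : X) :
    Tendsto (fun N => S.approx hX N y₀ x) atTop (𝓝 (S.f x)) := by
  rw [Metric.tendsto_nhds]
  intro ε hε
  obtain ⟨m, hm⟩ := exists_nat_one_div_lt (half_pos hε)
  choose n A hxA hA using exists_mem_small hbase x
  let σ : S.Chain m := fun j => ⟨n j, A j⟩
  filter_upwards [eventually_ge_atTop m,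
    eventually_all.2 fun j : Fin (m + 1) => eventually_ge_atTop (n j)] with N hmN hnN
  calc _ < 2 * (m + 1 : ℝ)⁻¹ :=
        dist_approx_lt hX N hmN (σ := σ) ⟨hnN, fun j => hA j⟩ (mem_iInter.2 fun j => hxA j) y₀
    _ < ε := by rw [one_div] at hm; linarith

end ZeroBaseData

theorem stmt10 {X Y : Type*} [TopologicalSpace X] [TopologicalSpace Y]
    [TopologicalSpace.MetrizableSpace Y] (hX : StronglyZeroDimensional X)
    (f : X → Y) (hf : MemSigmaF0 f) : MemB1 f := by
  let := TopologicalSpace.metrizableSpaceMetric Y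
  obtain ⟨B, hSFD, hzero, hbase⟩ := hf
  choose U hdisc hcoz hcl using fun n => (hSFD n : IsSFDFamily fun A : B n => (A : Set X))
  let S : ZeroBaseData X Y := ⟨f, B, U, hzero, hcoz, fun n A => subset_closure.trans (hcl n A),
    fun n => (hdisc n).locallyFinite⟩
  rcases isEmpty_or_nonempty X with _ | ⟨⟨x₀⟩⟩
  · exact ⟨fun _ => f, fun _ => continuous_of_discreteTopology, isEmptyElim⟩
  · exact ⟨fun N => S.approx hX N (f x₀), fun N => S.continuous_approx hX N _,
      S.tendsto_approx hX hbase _⟩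
end

section
/- Let X be an almost strongly zero-dimensional space, Y a T₁-space, and f : X → Y a finite-valued map in K₁(X,Y) (preimages of open sets are functionally F_σ). Then there exists a sequence of continuous finite-valued maps f_n : X → Y which converges stably to f: for every x ∈ X there is n₀ such that f_n(x) = f(x) for all n ≥ n₀. -/
/-!
Every fiber `f ⁻¹' {y}` is the preimage of the open set `(range f \ {y})ᶜ`, hence functionally
`F_σ`, hence a countable union of C-sets. Enumerate all these C-sets as `C 0, C 1, …`, labelled by
the value `v k` of `f` on `C k`, and write `C k = ⋂ n, W k n` with `W k` antitone and clopen.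
Then `g n x := v k` for the least `k ≤ n` with `x ∈ W k n` is locally constant with finite range.
If `x ∈ C j`, every `C i` with `i < j` either contains `x` (so `v i = f x`) or eventually loses it
from `W i n`; so from some `n` on, the least `k ≤ n` with `x ∈ W k n` carries the value `f x`.
-/

open Set Filter Topology

theorem IsCSigmaSet.iUnion {X : Type*} [TopologicalSpace X] {A : ℕ → Set X}
    (h : ∀ n, IsCSigmaSet (A n)) : IsCSigmaSet (⋃ n, A n) := by
  choose C hC hA using h
  refine ⟨fun k => C k.unpair.1 k.unpair.2, fun k => hC _ _, ?_⟩
  rw [Set.iUnion_unpair fun i j => C i j]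
  exact iUnion_congr hA

theorem FunctionallyFSigma.isCSigmaSet {X : Type*} [TopologicalSpace X]
    (hX : AlmostStronglyZeroDimensional X) {A : Set X} (hA : FunctionallyFSigma A) :
    IsCSigmaSet A := by
  obtain ⟨F, hF, rfl⟩ := hA
  exact IsCSigmaSet.iUnion fun n => hX _ (hF n)

theorem MemK1.functionallyFSigma_preimage_singleton {X Y : Type*} [TopologicalSpace X]
    [TopologicalSpace Y] [T1Space Y] {f : X → Y} (hf : MemK1 f) (hfin : (range f).Finite)
    (y : Y) : FunctionallyFSigma (f ⁻¹' {y}) := by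
  have hpre : f ⁻¹' (range f \ {y})ᶜ = f ⁻¹' {y} := by
    ext x
    simp
  rw [← hpre]
  exact hf _ (hfin.subset sdiff_subset).isClosed.isOpen_compl

theorem IsCSet.exists_antitone {X : Type*} [TopologicalSpace X] {A : Set X} (hA : IsCSet A) :
    ∃ W : ℕ → Set X, (∀ n, IsClopen (W n)) ∧ Antitone W ∧ A = ⋂ n, W n := by
  obtain ⟨U, hU, rfl⟩ := hA
  refine ⟨fun n => ⋂ t ≤ n, U t, fun n => (finite_Iic n).isClopen_biInter fun t _ => hU t,
    fun m n hmn => biInter_mono (fun t ht => le_trans ht hmn) fun _ _ => le_rfl, ?_⟩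
  ext x
  simp only [mem_iInter]
  exact ⟨fun h n t _ => h t, fun h t => h t t le_rfl⟩

section FirstHit

variable {X Y : Type*}

open Classical in
/-- `firstHit A v d k x` is `v i` for the least `i < k` with `x ∈ A i`, and `d` if there is none. -/
noncomputable def firstHit (A : ℕ → Set X) (v : ℕ → Y) (d : Y) : ℕ → X → Y
  | 0 => fun _ => d
  | k + 1 => fun x =>
    if x ∈ A 0 then v 0 else firstHit (fun i => A (i + 1)) (fun i => v (i + 1)) d k x

theorem firstHit_mem {A : ℕ → Set X} {v : ℕ → Y} {d : Y} {S : Set Y} (hd : d ∈ S)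
    (hv : ∀ i, v i ∈ S) (k : ℕ) (x : X) : firstHit A v d k x ∈ S := by
  induction k generalizing A v with
  | zero => exact hd
  | succ k ih =>
    simp only [firstHit]
    split_ifs
    exacts [hv 0, ih fun i => hv (i + 1)]

theorem firstHit_eq_of_mem {A : ℕ → Set X} {v : ℕ → Y} {d y : Y} {x : X} {j k : ℕ}
    (hjk : j < k) (hxj : x ∈ A j) (hvj : v j = y) (hprev : ∀ i < j, x ∈ A i → v i = y) :
    firstHit A v d k x = y := by
  induction j generalizing A v k with
  | zero =>
    obtain ⟨k, rfl⟩ := Nat.exists_eq_add_of_lt hjk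
    simp [firstHit, hxj, hvj]
  | succ j ih =>
    obtain ⟨k, rfl⟩ := Nat.exists_eq_add_of_lt hjk
    simp only [firstHit]
    split_ifs with hx0
    · exact hprev 0 j.succ_pos hx0
    · exact ih (by omega) hxj hvj fun i hi => hprev (i + 1) (by omega)

variable [TopologicalSpace X] [TopologicalSpace Y]

open Classical in
theorem continuous_firstHit {A : ℕ → Set X} (hA : ∀ i, IsClopen (A i)) (v : ℕ → Y) (d : Y)
    (k : ℕ) : Continuous (firstHit A v d k) := by
  induction k generalizing A v with
  | zero => exact continuous_const
  | succ k ih =>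
    exact continuous_const.if (by simp [(hA 0).frontier_eq]) (ih (fun i => hA (i + 1)) _)

end FirstHit

theorem exists_stable_approx_of_isCSet_cover {X Y : Type*} [TopologicalSpace X]
    [TopologicalSpace Y] {f : X → Y} {C : ℕ → Set X} {v : ℕ → Y} (hC : ∀ k, IsCSet (C k))
    (hcover : ∀ x, ∃ k, x ∈ C k) (hv : ∀ k, ∀ x ∈ C k, f x = v k) :
    ∃ g : ℕ → X → Y, (∀ n, Continuous (g n) ∧ range (g n) ⊆ range v) ∧
      ∀ x, ∀ᶠ n in atTop, g n x = f x := by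
  choose W hW hanti hCW using fun k => (hC k).exists_antitone
  refine ⟨fun n => firstHit (fun k => W k n) v (v 0) (n + 1), fun n =>
    ⟨continuous_firstHit (fun k => hW k n) _ _ _,
      range_subset_iff.2 <| firstHit_mem (mem_range_self 0) mem_range_self _⟩, fun x => ?_⟩
  obtain ⟨j, hxj⟩ := hcover x
  have hxW : ∀ n, x ∈ W j n := by simpa [hCW] using hxj
  -- an earlier `C i` either contains `x` or, `W i` being antitone, eventually excludes it
  have hprev : ∀ i ∈ Iio j, ∀ᶠ n in atTop, x ∈ W i n → v i = f x := by
    intro i _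
    by_cases hxi : x ∈ C i
    · exact Eventually.of_forall fun _ _ => (hv i x hxi).symm
    · obtain ⟨m, hm⟩ : ∃ m, x ∉ W i m := by simpa [hCW] using hxi
      exact eventually_atTop.2 ⟨m, fun n hn hxn => absurd (hanti i hn hxn) hm⟩
  filter_upwards [(eventually_all_finite (finite_Iio j)).2 hprev, eventually_gt_atTop j]
    with n hn hjn
  exact firstHit_eq_of_mem (Nat.lt_succ_of_lt hjn) (hxW n) (hv j x hxj).symm hn

theorem exists_isCSet_cover_of_isCSigmaSet_fibers {X Y : Type*} [TopologicalSpace X] {f : X → Y}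
    {s : ℕ → Y} (hs : range f ⊆ range s) (hfib : ∀ y, IsCSigmaSet (f ⁻¹' {y})) :
    ∃ (C : ℕ → Set X) (v : ℕ → Y), (∀ k, IsCSet (C k)) ∧ (∀ x, ∃ k, x ∈ C k) ∧
      (∀ k, ∀ x ∈ C k, f x = v k) ∧ range v ⊆ range s := by
  choose D hD hfD using fun j => hfib (s j)
  refine ⟨fun k => D k.unpair.1 k.unpair.2, fun k => s k.unpair.1, fun k => hD _ _, fun x => ?_,
    fun k x hx => ?_, range_comp_subset_range _ _⟩
  · obtain ⟨j, hj⟩ := hs (mem_range_self x)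
    have hx : x ∈ ⋃ r, D j r := hfD j ▸ hj.symm
    obtain ⟨r, hr⟩ := mem_iUnion.1 hx
    exact ⟨Nat.pair j r, by simpa using hr⟩
  · have hx' : x ∈ f ⁻¹' {s k.unpair.1} := hfD _ ▸ mem_iUnion_of_mem _ hx
    exact hx'

theorem stmt15 {X Y : Type*} [TopologicalSpace X] [TopologicalSpace Y] [T1Space Y]
    (hX : AlmostStronglyZeroDimensional X) (f : X → Y)
    (hfin : (Set.range f).Finite) (hf : MemK1 f) :
    ∃ g : ℕ → X → Y, (∀ n, Continuous (g n) ∧ (Set.range (g n)).Finite) ∧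
      ∀ x, ∃ n₀, ∀ n ≥ n₀, g n x = f x := by
  rcases isEmpty_or_nonempty X with hX₀ | hX₀
  · exact ⟨fun _ => f, fun _ => ⟨continuous_of_discreteTopology, hfin⟩, isEmptyElim⟩
  obtain ⟨s, hs⟩ := hfin.countable.exists_eq_range (range_nonempty f)
  obtain ⟨C, v, hC, hcover, hv, hvs⟩ := exists_isCSet_cover_of_isCSigmaSet_fibers hs.subset
    fun y => (hf.functionallyFSigma_preimage_singleton hfin y).isCSigmaSet hX
  obtain ⟨g, hg, hgf⟩ := exists_stable_approx_of_isCSet_cover hC hcover hv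
  exact ⟨g, fun n => ⟨(hg n).1, hfin.subset ((hg n).2.trans (hs ▸ hvs))⟩,
    fun x => eventually_atTop.1 (hgf x)⟩
end
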